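/- Let (Q, +) be a finite abelian group, φ, ψ automorphisms, a ∈ Q, and A(x,y) = φ(x) + ψ(y) + a. Then A is orthogonal to its (132)-parastrophe if and only if the map x ↦ φ²(x) + ψ(x) is a bijection of Q. -/

import Mathlib

/-! The change of variables `(x, y) ↦ (y, d)` with `d = p132 x y` has inverse `(y, d) ↦ (A y d, y)`,
and turns the pair `(A, p132)` into `(y, d) ↦ (A (A y d) y, d)`. So `A` is orthogonal to its
(132)-parastrophe iff every map `y ↦ A (A y d) y` is a bijection. For a T-quasigroup this map is
`y ↦ φ² y + ψ y` followed by the translation by `φ (ψ d) + φ a + a`. -/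

open Function

section Orthogonality

variable {α β γ : Type*}

def Orthogonal (A : α → α → β) (B : α → α → γ) : Prop :=
  ∀ c d, ∃! p : α × α, A p.1 p.2 = c ∧ B p.1 p.2 = d

theorem orthogonal_iff_bijective {A : α → α → β} {B : α → α → γ} :
    Orthogonal A B ↔ Bijective fun p : α × α => (A p.1 p.2, B p.1 p.2) := by
  simp only [Orthogonal, bijective_iff_existsUnique, Prod.forall, Prod.mk.injEq]

theorem bijective_fiberwise_iff {f : α → β → γ} :
    Bijective (fun q : α × β => (f q.1 q.2, q.2)) ↔ ∀ b, Bijective (f · b) := by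
  refine ⟨fun hf b => ⟨fun x y hxy => ?_, fun c => ?_⟩, fun hf => ⟨?_, ?_⟩⟩
  · simpa using @hf.1 (x, b) (y, b) (by simp [hxy])
  · obtain ⟨⟨x, b'⟩, hx⟩ := hf.2 (c, b)
    obtain ⟨rfl, rfl⟩ := Prod.mk.inj hx
    exact ⟨x, rfl⟩
  · rintro ⟨x, b⟩ ⟨y, b'⟩ hxy
    obtain ⟨hf', rfl⟩ := Prod.mk.inj hxy
    exact congrArg (·, b) ((hf b).1 hf')
  · rintro ⟨c, b⟩
    obtain ⟨x, rfl⟩ := (hf b).2 c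
    exact ⟨(x, b), rfl⟩

theorem orthogonal_parastrophe_iff {A B : α → α → α} (hBA : ∀ x y, B (A x y) x = y)
    (hAB : ∀ z x, A x (B z x) = z) :
    Orthogonal A B ↔ ∀ d, Bijective fun y => A (A y d) y := by
  let e : α × α ≃ α × α :=
    { toFun := fun p => (p.2, B p.1 p.2)
      invFun := fun q => (A q.1 q.2, q.1)
      left_inv := fun p => by simp [hAB]
      right_inv := fun q => by simp [hBA] }
  have h : (fun p : α × α => (A p.1 p.2, B p.1 p.2)) =
      (fun q : α × α => (A (A q.1 q.2) q.1, q.2)) ∘ e := by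
    ext p <;> simp [e, hAB]
  rw [orthogonal_iff_bijective, h, e.bijective_comp]
  exact bijective_fiberwise_iff (f := fun y d => A (A y d) y)

end Orthogonality

theorem T_orth_132_general {Q : Type*} [AddCommGroup Q] (φ ψ : Q ≃+ Q) (a : Q)
    (A p132 : Q → Q → Q) (hA : ∀ x y, A x y = φ x + ψ y + a)
    (h1 : ∀ x y, p132 (A x y) x = y) (h2 : ∀ z x, A x (p132 z x) = z) :
    (∀ c d : Q, ∃! p : Q × Q, A p.1 p.2 = c ∧ p132 p.1 p.2 = d) ↔
      Function.Bijective (fun x : Q => φ (φ x) + ψ x) := by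
  have hAA : ∀ d, (fun y => A (A y d) y) =
      (· + (φ (ψ d) + φ a + a)) ∘ fun y => φ (φ y) + ψ y := by
    intro d; ext y; simp only [hA, map_add, comp_apply]; abel
  change Orthogonal A p132 ↔ _
  simp only [orthogonal_parastrophe_iff h1 h2, hAA]
  simp only [← Equiv.coe_addRight, Equiv.comp_bijective, forall_const]

/-- a T-quasigroup A(x,y) = φx + ψy + a is orthogonal to its (132)-parastrophe
iff x ↦ φ²x + ψx is a bijection.  Here p132 z x = y iff A x y = z. -/
theorem T_orth_132 {Q : Type*} [AddCommGroup Q] [Fintype Q] (φ ψ : Q ≃+ Q) (a : Q)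
    (A p132 : Q → Q → Q) (hA : ∀ x y, A x y = φ x + ψ y + a)
    (h1 : ∀ x y, p132 (A x y) x = y) (h2 : ∀ z x, A x (p132 z x) = z) :
    (∀ c d : Q, ∃! p : Q × Q, A p.1 p.2 = c ∧ p132 p.1 p.2 = d) ↔
      Function.Bijective (fun x : Q => φ (φ x) + ψ x) :=
  T_orth_132_general φ ψ a A p132 hA h1 h2
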